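/- Let H be a finite hypergraph, b: V(H) → ℝ a baseload, and suppose θ and θ' are both balanced allocations on H with respect to b. Then ∂_b θ(i) = ∂_b θ'(i) for all i ∈ V(H). -/

import Mathlib

/-!
Write `D i = ∂_b θ(i) - ∂_b θ'(i) = ∑_{e ∋ i} (θ(e,i) - θ'(e,i))`. Exchanging the order of
summation, `∑_i D(i)² = ∑_e ∑_{i ∈ e} (θ(e,i) - θ'(e,i)) D(i)`. Balancedness puts all the mass
of `θ(e,·)` on the vertices of `e` of minimal `∂_b θ`, and all the mass of `θ'(e,·)` on those of
minimal `∂_b θ'`; comparing with the other allocation shows that each edge term is `≤ 0`.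
Hence `∑_i D(i)² ≤ 0`, so `D = 0`.
-/

open Finset

lemma sum_mul_le_sum_mul_of_support_subset_argmin {ι : Type*} {s : Finset ι} {w w' F : ι → ℝ}
    (hw : ∀ i ∈ s, ∀ j ∈ s, F j < F i → w i = 0) (hw_sum : ∑ i ∈ s, w i = 1)
    (hw'_nonneg : ∀ i ∈ s, 0 ≤ w' i) (hw'_sum : ∑ i ∈ s, w' i = 1) :
    ∑ i ∈ s, w i * F i ≤ ∑ i ∈ s, w' i * F i := by
  have hs : s.Nonempty := nonempty_of_sum_ne_zero (by rw [hw_sum]; exact one_ne_zero)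
  obtain ⟨i₀, hi₀, hmin⟩ := s.exists_min_image F hs
  have hw_avg : ∑ i ∈ s, w i * F i = F i₀ := by
    have hterm : ∀ i ∈ s, w i * F i = w i * F i₀ := fun i hi => by
      by_cases hwi : w i = 0
      · simp [hwi]
      · rw [le_antisymm (not_lt.mp fun h => hwi (hw i hi i₀ hi₀ h)) (hmin i hi)]
    rw [sum_congr rfl hterm, ← sum_mul, hw_sum, one_mul]
  calc ∑ i ∈ s, w i * F i = ∑ i ∈ s, w' i * F i₀ := by rw [hw_avg, ← sum_mul, hw'_sum, one_mul]
    _ ≤ ∑ i ∈ s, w' i * F i :=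
      sum_le_sum fun i hi => mul_le_mul_of_nonneg_left (hmin i hi) (hw'_nonneg i hi)

lemma sum_sub_mul_sub_nonpos_of_support_subset_argmin {ι : Type*} {s : Finset ι}
    {w w' F G : ι → ℝ}
    (hw_nonneg : ∀ i ∈ s, 0 ≤ w i) (hw : ∀ i ∈ s, ∀ j ∈ s, F j < F i → w i = 0)
    (hw_sum : ∑ i ∈ s, w i = 1)
    (hw'_nonneg : ∀ i ∈ s, 0 ≤ w' i) (hw' : ∀ i ∈ s, ∀ j ∈ s, G j < G i → w' i = 0)
    (hw'_sum : ∑ i ∈ s, w' i = 1) :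
    ∑ i ∈ s, (w i - w' i) * (F i - G i) ≤ 0 := by
  have hF := sum_mul_le_sum_mul_of_support_subset_argmin hw hw_sum hw'_nonneg hw'_sum
  have hG := sum_mul_le_sum_mul_of_support_subset_argmin hw' hw'_sum hw_nonneg hw_sum
  have hexpand : ∑ i ∈ s, (w i - w' i) * (F i - G i) =
      (∑ i ∈ s, w i * F i - ∑ i ∈ s, w' i * F i) + (∑ i ∈ s, w' i * G i - ∑ i ∈ s, w i * G i) := by
    simp only [← sum_sub_distrib, ← sum_add_distrib]
    exact sum_congr rfl fun i _ => by ring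
  linarith

namespace Hypergraph

variable {V : Type*} [DecidableEq V] (E : Finset (Finset V)) (b : V → ℝ)

/-- The load `∂_b θ` of an allocation `θ` on the hypergraph with edge set `E`. -/
def load (θ : Finset V → V → ℝ) (i : V) : ℝ :=
  b i + ∑ f ∈ E.filter (fun f => i ∈ f), θ f i

def IsBalanced (θ : Finset V → V → ℝ) : Prop :=
  ∀ e ∈ E, ∀ i ∈ e, ∀ j ∈ e, load E b θ j < load E b θ i → θ e i = 0

variable {E b}

lemma load_sub_load (θ θ' : Finset V → V → ℝ) (i : V) :
    load E b θ i - load E b θ' i = ∑ f ∈ E.filter (fun f => i ∈ f), (θ f i - θ' f i) := by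
  rw [load, load, sum_sub_distrib]
  ring

lemma sum_sq_load_sub_load (θ θ' : Finset V → V → ℝ) :
    ∑ i ∈ E.biUnion id, (load E b θ i - load E b θ' i) ^ 2 =
      ∑ e ∈ E, ∑ i ∈ e, (θ e i - θ' e i) * (load E b θ i - load E b θ' i) := by
  have hsq : ∀ i, (load E b θ i - load E b θ' i) ^ 2 =
      ∑ f ∈ E.filter (fun f => i ∈ f), (θ f i - θ' f i) * (load E b θ i - load E b θ' i) := by
    intro i
    rw [sq, ← sum_mul, ← load_sub_load]
  simp only [hsq]
  refine (sum_comm' fun e i => ?_).symm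
  simp only [mem_filter, mem_biUnion, id]
  exact ⟨fun ⟨he, hi⟩ => ⟨⟨he, hi⟩, e, he, hi⟩, fun ⟨h, _⟩ => h⟩

theorem load_eq_of_isBalanced {θ θ' : Finset V → V → ℝ}
    (hθ_nonneg : ∀ e ∈ E, ∀ i ∈ e, 0 ≤ θ e i) (hθ_sum : ∀ e ∈ E, ∑ i ∈ e, θ e i = 1)
    (hθ'_nonneg : ∀ e ∈ E, ∀ i ∈ e, 0 ≤ θ' e i) (hθ'_sum : ∀ e ∈ E, ∑ i ∈ e, θ' e i = 1)
    (hθ : IsBalanced E b θ) (hθ' : IsBalanced E b θ') :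
    load E b θ = load E b θ' := by
  have hsum_nonpos : ∑ i ∈ E.biUnion id, (load E b θ i - load E b θ' i) ^ 2 ≤ 0 := by
    rw [sum_sq_load_sub_load]
    exact sum_nonpos fun e he => sum_sub_mul_sub_nonpos_of_support_subset_argmin
      (hθ_nonneg e he) (hθ e he) (hθ_sum e he) (hθ'_nonneg e he) (hθ' e he) (hθ'_sum e he)
  have hsq_zero := (sum_eq_zero_iff_of_nonneg fun i _ => sq_nonneg _).mp
    (le_antisymm hsum_nonpos (sum_nonneg fun i _ => sq_nonneg _))
  funext i
  by_cases hi : i ∈ E.biUnion id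
  · exact sub_eq_zero.mp (pow_eq_zero_iff two_ne_zero |>.mp (hsq_zero i hi))
  · have hno_edge : E.filter (fun f => i ∈ f) = ∅ :=
      filter_eq_empty_iff.mpr fun f hf hif => hi (mem_biUnion.mpr ⟨f, hf, hif⟩)
    simp only [load, hno_edge, sum_empty]

end Hypergraph

theorem balanced_load_unique_finite_general
    {V : Type*} [DecidableEq V]
    (E : Finset (Finset V)) (b : V → ℝ) (θ θ' : Finset V → V → ℝ)
    (hθ0 : ∀ e ∈ E, ∀ i ∈ e, 0 ≤ θ e i)
    (hθsum : ∀ e ∈ E, ∑ i ∈ e, θ e i = 1)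
    (hθ'0 : ∀ e ∈ E, ∀ i ∈ e, 0 ≤ θ' e i)
    (hθ'sum : ∀ e ∈ E, ∑ i ∈ e, θ' e i = 1)
    (hbal : ∀ e ∈ E, ∀ i ∈ e, ∀ j ∈ e,
      b i + (∑ f ∈ E.filter (fun f => i ∈ f), θ f i) >
          b j + (∑ f ∈ E.filter (fun f => j ∈ f), θ f j) → θ e i = 0)
    (hbal' : ∀ e ∈ E, ∀ i ∈ e, ∀ j ∈ e,
      b i + (∑ f ∈ E.filter (fun f => i ∈ f), θ' f i) >
          b j + (∑ f ∈ E.filter (fun f => j ∈ f), θ' f j) → θ' e i = 0) :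
    ∀ i : V, b i + (∑ f ∈ E.filter (fun f => i ∈ f), θ f i) =
      b i + (∑ f ∈ E.filter (fun f => i ∈ f), θ' f i) :=
  congrFun (Hypergraph.load_eq_of_isBalanced hθ0 hθsum hθ'0 hθ'sum hbal hbal')

theorem balanced_load_unique_finite
    {V : Type*} [Fintype V] [DecidableEq V]
    (E : Finset (Finset V)) (b : V → ℝ) (θ θ' : Finset V → V → ℝ)
    (hθ0 : ∀ e ∈ E, ∀ i ∈ e, 0 ≤ θ e i) (hθ1 : ∀ e ∈ E, ∀ i ∈ e, θ e i ≤ 1)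
    (hθsum : ∀ e ∈ E, ∑ i ∈ e, θ e i = 1)
    (hθ'0 : ∀ e ∈ E, ∀ i ∈ e, 0 ≤ θ' e i) (hθ'1 : ∀ e ∈ E, ∀ i ∈ e, θ' e i ≤ 1)
    (hθ'sum : ∀ e ∈ E, ∑ i ∈ e, θ' e i = 1)
    (hbal : ∀ e ∈ E, ∀ i ∈ e, ∀ j ∈ e,
      b i + (∑ f ∈ E.filter (fun f => i ∈ f), θ f i) >
          b j + (∑ f ∈ E.filter (fun f => j ∈ f), θ f j) → θ e i = 0)
    (hbal' : ∀ e ∈ E, ∀ i ∈ e, ∀ j ∈ e,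
      b i + (∑ f ∈ E.filter (fun f => i ∈ f), θ' f i) >
          b j + (∑ f ∈ E.filter (fun f => j ∈ f), θ' f j) → θ' e i = 0) :
    ∀ i : V, b i + (∑ f ∈ E.filter (fun f => i ∈ f), θ f i) =
      b i + (∑ f ∈ E.filter (fun f => i ∈ f), θ' f i) :=
  balanced_load_unique_finite_general E b θ θ' hθ0 hθsum hθ'0 hθ'sum hbal hbal'
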